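/- Let a = (f_1,…,f_r) ⊆ R = k[x_0,…,x_n] and b = (g_1,…,g_s) ⊆ S = k[y_0,…,y_m] be homogeneous ideals with deg f_i = d_i and deg g_j = e_j, and let I ⊆ P = k[z_{ij}] be the ideal defining the Segre product Z = V_+(a) × V_+(b) ⊆ P^N. For i = 1,…,r and l = 0,…,m set (f_i)_l = f_i(z_{0l},…,z_{nl}), and for j = 1,…,s and t = 0,…,n set (g_j)_t = g_j(z_{t0},…,z_{tm}); let J′ be the ideal of P generated by all the (f_i)_l and (g_j)_t, and let I_2(Z) be the ideal generated by the 2×2 minors of the matrix (z_{ij}). Then √I = √(I_2(Z) + J′). -/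

import Mathlib

/-!
The Segre substitution `z_{ij} ↦ xᵢ yⱼ` kills the `2 × 2` minors and sends `(fᵢ)_l` to
`y_l^{dᵢ} fᵢ(x) ∈ a` (similarly for `(gⱼ)_t`), so `I₂(Z) + J′ ⊆ I`.

Conversely, let `𝔭` be a prime containing `I₂(Z) + J′` and `K` the fraction field of `P/𝔭`. The
image of the generic matrix `(z_{ij})` in `K` has vanishing `2 × 2` minors, so it is a product
`uᵢ vⱼ`, with `u` a multiple of a column and `v` a row. By homogeneity `f(u) = 0` and `g(v) = 0`,
so `P → K` factors as the Segre substitution followed by evaluation at `(u, v)`, which kills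
`a` and `b`. Hence `I ⊆ 𝔭`.
-/

open MvPolynomial

-- `(R/a) # (S/b)` is a direct summand of `(R/a) ⊗ (S/b) ≅ (R ⊗ S)/(aᵉ + bᵉ)`, so the kernel may be
-- computed in the tensor product.
/-- The ideal of `P = k[z_{ij}]` defining the Segre product
`V₊(a) × V₊(b) ⊆ ℙ^{nm+n+m}`: the kernel of the map `z_{ij} ↦ x_i y_j (mod a,b)`. -/
noncomputable def segreIdeal (k : Type*) [Field k] (n m : ℕ)
    (a : Ideal (MvPolynomial (Fin (n+1)) k)) (b : Ideal (MvPolynomial (Fin (m+1)) k)) :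
    Ideal (MvPolynomial (Fin (n+1) × Fin (m+1)) k) :=
  RingHom.ker (MvPolynomial.aeval (R := k) (fun p : Fin (n+1) × Fin (m+1) =>
    Ideal.Quotient.mk
      (a.map (MvPolynomial.rename (Sum.inl : Fin (n+1) → Fin (n+1) ⊕ Fin (m+1)))
        ⊔ b.map (MvPolynomial.rename (Sum.inr : Fin (m+1) → Fin (n+1) ⊕ Fin (m+1))))
      (X (Sum.inl p.1) * X (Sum.inr p.2))))

/-- The ideal generated by the `2 × 2`-minors of the generic `(n+1) × (m+1)` matrix
`(z_{ij})`. -/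
noncomputable def minorsIdeal (k : Type*) [Field k] (n m : ℕ) :
    Ideal (MvPolynomial (Fin (n+1) × Fin (m+1)) k) :=
  Ideal.span {F | ∃ (i i' : Fin (n+1)) (j j' : Fin (m+1)),
    F = X (i, j) * X (i', j') - X (i, j') * X (i', j)}

namespace MvPolynomial

theorem IsHomogeneous.aeval_mul_left {R A σ : Type*} [CommSemiring R] [CommSemiring A]
    [Algebra R A] {φ : MvPolynomial σ R} {d : ℕ} (hφ : φ.IsHomogeneous d) (c : A) (w : σ → A) :
    MvPolynomial.aeval (fun i => c * w i) φ = c ^ d * MvPolynomial.aeval w φ := by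
  conv_lhs => rw [φ.as_sum]
  conv_rhs => rw [φ.as_sum]
  simp only [map_sum, Finset.mul_sum, aeval_monomial]
  refine Finset.sum_congr rfl fun u hu => ?_
  have hdeg : ∑ i ∈ u.support, u i = d := by
    have h := hφ (mem_support_iff.mp hu)
    rwa [show (1 : σ → ℕ) = fun _ => 1 from rfl, ← Finsupp.degree_eq_weight_one] at h
  simp only [Finsupp.prod, mul_pow, Finset.prod_mul_distrib, Finset.prod_pow_eq_pow_sum, hdeg]
  ring

end MvPolynomial

theorem exists_eq_mul_col_mul_row_of_mul_eq_mul {K ι κ : Type*} [Field K] [Nonempty ι]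
    [Nonempty κ] (M : ι → κ → K) (hM : ∀ i i' j j', M i j * M i' j' = M i j' * M i' j) :
    ∃ (c : K) (i₀ : ι) (j₀ : κ), ∀ i j, M i j = c * M i j₀ * M i₀ j := by
  by_cases h : ∃ i₀ j₀, M i₀ j₀ ≠ 0
  · obtain ⟨i₀, j₀, h₀⟩ := h
    refine ⟨(M i₀ j₀)⁻¹, i₀, j₀, fun i j => ?_⟩
    field_simp
    linear_combination hM i i₀ j j₀
  · push Not at h
    exact ⟨0, Classical.arbitrary ι, Classical.arbitrary κ, fun i j => by simp [h]⟩

section Segre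

variable (k : Type*) [CommRing k] (ι κ : Type*)

noncomputable def segreHom : MvPolynomial (ι × κ) k →ₐ[k] MvPolynomial (ι ⊕ κ) k :=
  aeval fun p => X (Sum.inl p.1) * X (Sum.inr p.2)

variable {k ι κ}

@[simp]
theorem segreHom_X (i : ι) (j : κ) :
    segreHom k ι κ (X (i, j)) = X (Sum.inl i) * X (Sum.inr j) :=
  aeval_X _ _

theorem segreHom_aeval_column {q : MvPolynomial ι k} {d : ℕ} (hq : q.IsHomogeneous d) (j : κ) :
    segreHom k ι κ (aeval (fun i => X (i, j)) q) = X (Sum.inr j) ^ d * rename Sum.inl q := by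
  rw [comp_aeval_apply, rename_eq_aeval, ← hq.aeval_mul_left]
  simp [mul_comm]

theorem segreHom_aeval_row {q : MvPolynomial κ k} {d : ℕ} (hq : q.IsHomogeneous d) (i : ι) :
    segreHom k ι κ (aeval (fun j => X (i, j)) q) = X (Sum.inl i) ^ d * rename Sum.inr q := by
  rw [comp_aeval_apply, rename_eq_aeval, ← hq.aeval_mul_left]
  simp

theorem segreHom_minor (i i' : ι) (j j' : κ) :
    segreHom k ι κ (X (i, j) * X (i', j') - X (i, j') * X (i', j)) = 0 := by
  simp only [map_sub, map_mul, segreHom_X]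
  ring

theorem exists_eq_comp_segreHom {K : Type*} [Field K] [Algebra k K] [Nonempty ι] [Nonempty κ]
    (φ : MvPolynomial (ι × κ) k →ₐ[k] K)
    (hφ : ∀ i i' j j', φ (X (i, j) * X (i', j') - X (i, j') * X (i', j)) = 0) :
    ∃ (c : K) (i₀ : ι) (j₀ : κ),
      φ = (aeval (Sum.elim (fun i => c * φ (X (i, j₀))) fun j => φ (X (i₀, j)))).comp
        (segreHom k ι κ) := by
  obtain ⟨c, i₀, j₀, hc⟩ := exists_eq_mul_col_mul_row_of_mul_eq_mul (fun i j => φ (X (i, j)))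
    fun i i' j j' => by simpa [sub_eq_zero] using hφ i i' j j'
  exact ⟨c, i₀, j₀, algHom_ext fun ⟨i, j⟩ => by simp [hc i j]⟩

end Segre

/-- The ideal `J′` of the substituted polynomials `(fᵢ)_l` and `(gⱼ)_t`. -/
noncomputable def diagonalSubstIdeal {k σ τ ι κ : Type*} [CommRing k] (f : σ → MvPolynomial ι k) (g : τ → MvPolynomial κ k) :
    Ideal (MvPolynomial (ι × κ) k) :=
  Ideal.span ((Set.range fun p : σ × κ => aeval (fun i => X (i, p.2)) (f p.1)) ∪
    Set.range fun p : τ × ι => aeval (fun j => X (p.2, j)) (g p.1))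

section SegreIdeal

variable {k : Type*} [Field k] {n m : ℕ} {σ τ : Type*}

theorem segreIdeal_eq_comap (a : Ideal (MvPolynomial (Fin (n+1)) k))
    (b : Ideal (MvPolynomial (Fin (m+1)) k)) :
    segreIdeal k n m a b =
      (a.map (rename Sum.inl) ⊔ b.map (rename Sum.inr)).comap (segreHom k _ _) := by
  ext F
  rw [segreIdeal, RingHom.mem_ker, Ideal.mem_comap, ← Ideal.Quotient.eq_zero_iff_mem,
    ← Ideal.Quotient.mkₐ_eq_mk k, ← comp_aeval_apply]
  rfl

theorem minorsIdeal_sup_diagonalSubstIdeal_le_segreIdeal {f : σ → MvPolynomial (Fin (n+1)) k}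
    {g : τ → MvPolynomial (Fin (m+1)) k} {d : σ → ℕ} {e : τ → ℕ}
    (hf : ∀ i, (f i).IsHomogeneous (d i)) (hg : ∀ j, (g j).IsHomogeneous (e j)) :
    minorsIdeal k n m ⊔ diagonalSubstIdeal f g ≤
      segreIdeal k n m (Ideal.span (Set.range f)) (Ideal.span (Set.range g)) := by
  rw [segreIdeal_eq_comap, minorsIdeal, diagonalSubstIdeal, ← Ideal.span_union, Ideal.span_le]
  rintro _ (⟨i, i', j, j', rfl⟩ | ⟨⟨i, j⟩, rfl⟩ | ⟨⟨j, i⟩, rfl⟩) <;>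
    simp only [SetLike.mem_coe, Ideal.mem_comap]
  · rw [segreHom_minor]
    exact zero_mem _
  · rw [segreHom_aeval_column (hf i)]
    exact Ideal.mem_sup_left (Ideal.mul_mem_left _ _
      (Ideal.mem_map_of_mem _ (Ideal.subset_span ⟨i, rfl⟩)))
  · rw [segreHom_aeval_row (hg j)]
    exact Ideal.mem_sup_right (Ideal.mul_mem_left _ _
      (Ideal.mem_map_of_mem _ (Ideal.subset_span ⟨j, rfl⟩)))

theorem segreIdeal_le_ker {f : σ → MvPolynomial (Fin (n+1)) k}
    {g : τ → MvPolynomial (Fin (m+1)) k} {d : σ → ℕ} (hf : ∀ i, (f i).IsHomogeneous (d i))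
    {K : Type*} [Field K] [Algebra k K] (φ : MvPolynomial (Fin (n+1) × Fin (m+1)) k →ₐ[k] K)
    (hφ : minorsIdeal k n m ⊔ diagonalSubstIdeal f g ≤ RingHom.ker φ) :
    segreIdeal k n m (Ideal.span (Set.range f)) (Ideal.span (Set.range g)) ≤ RingHom.ker φ := by
  have hminors i i' j j' : φ (X (i, j) * X (i', j') - X (i, j') * X (i', j)) = 0 :=
    hφ (Ideal.mem_sup_left (Ideal.subset_span ⟨i, i', j, j', rfl⟩))
  have hsubst (p) : p ∈ diagonalSubstIdeal f g → φ p = 0 := fun hp =>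
    hφ (Ideal.mem_sup_right hp)
  obtain ⟨c, i₀, j₀, hfactor⟩ := exists_eq_comp_segreHom φ hminors
  set η := aeval (R := k) (Sum.elim (fun i => c * φ (X (i, j₀))) fun j => φ (X (i₀, j)))
  have hη : (Ideal.span (Set.range f)).map (rename Sum.inl) ⊔
      (Ideal.span (Set.range g)).map (rename Sum.inr) ≤ RingHom.ker η := by
    refine sup_le (Ideal.map_le_iff_le_comap.mpr (Ideal.span_le.mpr ?_))
      (Ideal.map_le_iff_le_comap.mpr (Ideal.span_le.mpr ?_)) <;> rintro _ ⟨i, rfl⟩ <;>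
      simp only [SetLike.mem_coe, Ideal.mem_comap, RingHom.mem_ker, η, aeval_rename]
    · rw [Sum.elim_comp_inl, (hf i).aeval_mul_left, ← comp_aeval_apply,
        hsubst _ (Ideal.subset_span (Or.inl ⟨(i, j₀), rfl⟩)), mul_zero]
    · rw [Sum.elim_comp_inr, ← comp_aeval_apply,
        hsubst _ (Ideal.subset_span (Or.inr ⟨(i, i₀), rfl⟩))]
  rw [segreIdeal_eq_comap, hfactor]
  exact fun F hF => hη hF

theorem segreIdeal_le_of_isPrime {f : σ → MvPolynomial (Fin (n+1)) k}
    {g : τ → MvPolynomial (Fin (m+1)) k} {d : σ → ℕ} (hf : ∀ i, (f i).IsHomogeneous (d i))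
    (𝔭 : Ideal (MvPolynomial (Fin (n+1) × Fin (m+1)) k)) [𝔭.IsPrime]
    (h𝔭 : minorsIdeal k n m ⊔ diagonalSubstIdeal f g ≤ 𝔭) :
    segreIdeal k n m (Ideal.span (Set.range f)) (Ideal.span (Set.range g)) ≤ 𝔭 := by
  let φ := (IsScalarTower.toAlgHom k (MvPolynomial (Fin (n+1) × Fin (m+1)) k ⧸ 𝔭)
    (FractionRing (MvPolynomial (Fin (n+1) × Fin (m+1)) k ⧸ 𝔭))).comp (Ideal.Quotient.mkₐ k 𝔭)
  have hker : RingHom.ker φ = 𝔭 := by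
    ext F
    simp [φ, RingHom.mem_ker, Ideal.Quotient.eq_zero_iff_mem]
  rw [← hker] at h𝔭 ⊢
  exact segreIdeal_le_ker hf φ h𝔭

end SegreIdeal

theorem segre_radical_eq_minors_sup_diagonal_substitutions
    (k : Type*) [Field k] (n m : ℕ) (r s : ℕ)
    (f : Fin r → MvPolynomial (Fin (n+1)) k) (g : Fin s → MvPolynomial (Fin (m+1)) k)
    (d : Fin r → ℕ) (e : Fin s → ℕ)
    (hf : ∀ i, (f i).IsHomogeneous (d i)) (hg : ∀ j, (g j).IsHomogeneous (e j))
    -- the substituted polynomials (fᵢ)_l and (gⱼ)_t :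
    (J' : Ideal (MvPolynomial (Fin (n+1) × Fin (m+1)) k))
    (hJ' : J' = Ideal.span
      ((Set.range fun p : Fin r × Fin (m+1) =>
          MvPolynomial.aeval (fun i : Fin (n+1) => X (i, p.2)) (f p.1)) ∪
       (Set.range fun p : Fin s × Fin (n+1) =>
          MvPolynomial.aeval (fun j : Fin (m+1) => X (p.2, j)) (g p.1)))) :
    (segreIdeal k n m (Ideal.span (Set.range f)) (Ideal.span (Set.range g))).radical
      = (minorsIdeal k n m ⊔ J').radical := by
  change J' = diagonalSubstIdeal f g at hJ'
  subst hJ'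
  refine le_antisymm ?_
    (Ideal.radical_mono (minorsIdeal_sup_diagonalSubstIdeal_le_segreIdeal hf hg))
  rw [Ideal.radical_le_radical_iff, Ideal.radical_eq_sInf]
  exact le_sInf fun 𝔭 ⟨h𝔭, _⟩ => segreIdeal_le_of_isPrime hf 𝔭 h𝔭
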